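/- Let τ and μ be partitions of n with τ ⊴ μ in the dominance order and with equal first parts τ_1 = μ_1 = a. Then every partition σ of n with τ ⊴ σ ⊴ μ satisfies σ_1 = a, and the map σ ↦ σ² = (σ_2, σ_3, …) is an order isomorphism (with respect to dominance) from the interval {σ a partition of n : τ ⊴ σ ⊴ μ} onto the interval {γ a partition of n − a : τ² ⊴ γ ⊴ μ²}. -/

import Mathlib

/-- A partition, recorded by its (1-indexed) sequence of parts: weakly decreasing from
index `1` on, eventually zero, with the unused index `0` set to `0`. -/
structure Ptn where
  parts : ℕ → ℕ
  zero_at_zero : parts 0 = 0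
  antitone : ∀ ⦃i j : ℕ⦄, 1 ≤ i → i ≤ j → parts j ≤ parts i
  eventually_zero : ∃ N : ℕ, ∀ i : ℕ, N ≤ i → parts i = 0

namespace Ptn

/-- The number of (nonzero) parts. -/
noncomputable def numParts (l : Ptn) : ℕ :=
  sInf {N : ℕ | ∀ i : ℕ, N < i → l.parts i = 0}

/-- The size `|λ|`, i.e. the integer that `λ` is a partition of. -/
noncomputable def size (l : Ptn) : ℕ :=
  ∑ i ∈ Finset.Icc 1 l.numParts, l.parts i

/-- The β-set `B_r(λ) = {λ_i + r - i : 1 ≤ i ≤ r}` of `λ` with `r` beads. -/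
def betaSet (l : Ptn) (r : ℕ) : Finset ℕ :=
  (Finset.Icc 1 r).image fun i => l.parts i + r - i

end Ptn

/-- The β-set of the `e`-core: push all beads on each runner as high as possible. -/
def coreBeta (e : ℕ) (B : Finset ℕ) : Finset ℕ :=
  (Finset.range e).biUnion fun k =>
    (Finset.range ((B.filter fun x => x % e = k).card)).image fun j => j * e + k

/-- The `e`-weight of the abacus display `B`. -/
def eWeight (e : ℕ) (B : Finset ℕ) : ℕ :=
  ((∑ b ∈ B, b) - ∑ b ∈ coreBeta e B, b) / e

/-- Two partitions have the same `e`-core. -/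
def SameCore (e : ℕ) (l m : Ptn) : Prop :=
  ∀ r : ℕ, l.numParts ≤ r → m.numParts ≤ r →
    coreBeta e (l.betaSet r) = coreBeta e (m.betaSet r)

/-- `λ` is `e`-regular: it has no `e` equal nonzero parts. -/
def Regular (e : ℕ) (l : Ptn) : Prop :=
  ∀ i : ℕ, 1 ≤ i → l.parts i ≠ 0 → l.parts (i + e - 1) < l.parts i

/-- The sign (if any) contributed by row `x` to the `k`-signature of the display `B`:
`some false` is a `−` (bead on runner `k`, none on runner `k-1`),
`some true` is a `+` (bead on runner `k-1`, none on runner `k`). -/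
def signAt (e k : ℕ) (B : Finset ℕ) (x : ℕ) : Option Bool :=
  if x * e + k ∈ B ∧ x * e + (k - 1) ∉ B then some false
  else if x * e + (k - 1) ∈ B ∧ x * e + k ∉ B then some true
  else none

/-- The `k`-signature of the display `B`, reading rows from top to bottom. -/
def signature (e k : ℕ) (B : Finset ℕ) : List Bool :=
  (List.range (B.sup id / e + 1)).filterMap (signAt e k B)

/-- Successively delete adjacent `−+` pairs until none remain. -/
def reduceSig : List Bool → List Bool
  | [] => []
  | s :: rest =>
    match reduceSig rest with
    | [] => [s]
    | t :: rest' => if s = false ∧ t = true then rest' else s :: t :: rest'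

/-- The number of `−` signs in the reduced `k`-signature of `B`,
i.e. the number of normal beads on runner `k`. -/
def normalCount (e k : ℕ) (B : Finset ℕ) : ℕ :=
  (reduceSig (signature e k B)).count false

/-- The abacus display with `e` runners whose beads on runner `k` sit in the rows `rows k`. -/
def runnerBeta (e : ℕ) (rows : ℕ → Finset ℕ) : Finset ℕ :=
  (Finset.range e).biUnion fun k => (rows k).image fun y => y * e + k

/-- Rows of a 5-bead runner carrying the empty partition. -/
def rowsEmpty : Finset ℕ := {0, 1, 2, 3, 4}
/-- Rows of a 5-bead runner carrying the partition `(3,2)`. -/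
def rows32 : Finset ℕ := {0, 1, 2, 5, 7}
/-- Rows of a 5-bead runner carrying the partition `(2,2)`. -/
def rows22 : Finset ℕ := {0, 1, 2, 5, 6}
/-- Rows of a 5-bead runner carrying the partition `(1)`. -/
def rows1 : Finset ℕ := {0, 1, 2, 3, 5}
/-- Rows of a 5-bead runner carrying the partition `(5)`. -/
def rows5 : Finset ℕ := {0, 1, 2, 3, 9}
/-- Rows of a 5-bead runner carrying the partition `(4)`. -/
def rows4 : Finset ℕ := {0, 1, 2, 3, 8}

/-- The β-set (with `5e` beads) of `⟨i_{3,2}⟩`. -/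
def shape32 (e i : ℕ) : Finset ℕ :=
  runnerBeta e fun k => if k = i then rows32 else rowsEmpty

/-- The β-set (with `5e` beads) of `⟨i_{2²}, j⟩`. -/
def shapeA (e i j : ℕ) : Finset ℕ :=
  runnerBeta e fun k => if k = i then rows22 else if k = j then rows1 else rowsEmpty

/-- The β-set (with `5e` beads) of `⟨j, i_{2²}⟩`. -/
def shapeB (e j i : ℕ) : Finset ℕ :=
  runnerBeta e fun k => if k = j then rows1 else if k = i then rows22 else rowsEmpty

/-- The β-set (with `5e` beads) of `⟨i_5⟩`. -/
def shape5 (e i : ℕ) : Finset ℕ :=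
  runnerBeta e fun k => if k = i then rows5 else rowsEmpty

/-- The β-set (with `5e` beads) of `⟨i_4, i+1⟩`. -/
def shape41 (e i : ℕ) : Finset ℕ :=
  runnerBeta e fun k => if k = i then rows4 else if k = i + 1 then rows1 else rowsEmpty

/-- The β-set (with `5e` beads) of `⟨0, i_4⟩`. -/
def shape04 (e i : ℕ) : Finset ℕ :=
  runnerBeta e fun k => if k = 0 then rows1 else if k = i then rows4 else rowsEmpty

/-- The `e`-weight of the bead at position `a` of the display `B`. -/
def beadWt (e : ℕ) (B : Finset ℕ) (a : ℕ) : ℕ :=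
  ((Finset.Icc 1 (a / e)).filter fun j => a - j * e ∉ B).card

/-- The induced `e`-sequence of the display `B`, as a multiset:
each bead of positive weight `w` at position `a` contributes `a, a-e, …, a-(w-1)e`. -/
def indSeq (e : ℕ) (B : Finset ℕ) : Multiset ℕ :=
  B.val.bind fun a => (Multiset.range (beadWt e B a)).map fun u => a - u * e

/-- The product order `λ ≤_P μ`. -/
def ProdLE (e : ℕ) (l m : Ptn) : Prop :=
  l.size = m.size ∧ SameCore e l m ∧
  (∀ r : ℕ, l.numParts ≤ r → m.numParts ≤ r →
    eWeight e (l.betaSet r) = eWeight e (m.betaSet r)) ∧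
  ∃ N₀ : ℕ, ∀ N : ℕ, N₀ ≤ N → l.numParts ≤ N → m.numParts ≤ N →
    List.Forall₂ (· ≤ ·) (Multiset.sort (indSeq e (l.betaSet N)) (· ≤ ·))
      (Multiset.sort (indSeq e (m.betaSet N)) (· ≤ ·))

/-- The dominance order `λ ⊴ μ`. -/
def Dom (l m : Ptn) : Prop :=
  ∀ t : ℕ, ∑ i ∈ Finset.Icc 1 t, l.parts i ≤ ∑ i ∈ Finset.Icc 1 t, m.parts i

/-- `λ →^σ τ` on displays with `k` beads. -/
def JStep (e k : ℕ) (l τ : Ptn) : Prop :=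
  l.numParts ≤ k ∧ τ.numParts ≤ k ∧
  ∃ (σ : Finset ℕ) (a b i : ℕ), 1 ≤ i ∧ a < b ∧
    a ∈ l.betaSet k ∧ i * e ≤ a ∧ a - i * e ∉ l.betaSet k ∧
    σ = insert (a - i * e) ((l.betaSet k).erase a) ∧
    i * e ≤ b ∧ b - i * e ∈ σ ∧ b ∉ σ ∧
    τ.betaSet k = insert b (σ.erase (b - i * e))

/-- `λ → τ`: `λ →^σ τ` for some `σ` (on some common number of beads). -/
def JRel (e : ℕ) (l τ : Ptn) : Prop := ∃ k : ℕ, JStep e k l τ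

/-- The Jantzen order `≤_J`: reflexive-transitive closure of `→`. -/
def JLE (e : ℕ) : Ptn → Ptn → Prop := Relation.ReflTransGen (JRel e)

/-- One upward bead move on a β-set. -/
def Step (e : ℕ) (B B' : Finset ℕ) : Prop :=
  ∃ b ∈ B, e ≤ b ∧ b - e ∉ B ∧ B' = insert (b - e) (B.erase b)

/-- No upward bead move is possible. -/
def Terminal (e : ℕ) (B : Finset ℕ) : Prop := ∀ b ∈ B, e ≤ b → b - e ∈ B

/-- `B` is the β-set of `μ` with `r` beads. -/
def IsBetaOf (B : Finset ℕ) (r : ℕ) (μ : Ptn) : Prop :=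
  μ.numParts ≤ r ∧ μ.betaSet r = B

/-- The number of beads of the display `B` on runner `i`. -/
def cnt (e : ℕ) (B : Finset ℕ) (i : ℕ) : ℕ := (B.filter fun x => x % e = i).card

/-- The set of rows of the display `B` occupied by beads on runner `i`. -/
def rowsOf (e : ℕ) (B : Finset ℕ) (i : ℕ) : Finset ℕ :=
  (B.filter fun x => x % e = i).image fun x => x / e

/-- `ν²`: the partition obtained by removing the first part. -/
def Ptn.tail (l : Ptn) : Ptn where
  parts := fun i => if i = 0 then 0 else l.parts (i + 1)
  zero_at_zero := rfl
  antitone := by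
    intro i j hi hij
    rw [if_neg (by omega : i ≠ 0), if_neg (by omega : j ≠ 0)]
    exact l.antitone (by omega) (by omega)
  eventually_zero := by
    obtain ⟨N, hN⟩ := l.eventually_zero
    refine ⟨N + 1, fun i hi => ?_⟩
    rw [if_neg (by omega : i ≠ 0)]
    exact hN _ (by omega)

/-!
Dominance at `t = 1` compares first parts, so anything squeezed between `τ` and `μ` has first
part `a`. Once the first parts agree, the prefix sums of length `t + 1` of two partitions differ
by exactly the prefix sums of length `t` of their tails; hence dominance, sizes and equality all
transfer along `σ ↦ σ²`, and the inverse map prepends the part `a`.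
-/

namespace Ptn

@[ext]
theorem ext {l m : Ptn} (h : ∀ i, l.parts i = m.parts i) : l = m := by
  cases l; cases m
  simp only [mk.injEq]
  exact funext h

theorem parts_eq_zero_of_numParts_lt (l : Ptn) {i : ℕ} (h : l.numParts < i) : l.parts i = 0 := by
  obtain ⟨N, hN⟩ := l.eventually_zero
  exact Nat.sInf_mem (s := {N : ℕ | ∀ i : ℕ, N < i → l.parts i = 0})
    ⟨N, fun i hi => hN i hi.le⟩ i h

theorem sum_Icc_eq_size (l : Ptn) {t : ℕ} (h : ∀ i, t < i → l.parts i = 0) :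
    ∑ i ∈ Finset.Icc 1 t, l.parts i = l.size := by
  have ht : l.numParts ≤ t := Nat.sInf_le h
  refine (Finset.sum_subset (Finset.Icc_subset_Icc_right ht) fun i hi hi' => ?_).symm
  simp only [Finset.mem_Icc, not_and, not_le] at hi hi'
  exact l.parts_eq_zero_of_numParts_lt (hi' hi.1)

theorem tail_parts (l : Ptn) {i : ℕ} (hi : i ≠ 0) : l.tail.parts i = l.parts (i + 1) := by
  simp [tail, hi]

theorem sum_Icc_succ_eq_add_sum_tail (l : Ptn) (t : ℕ) :
    ∑ i ∈ Finset.Icc 1 (t + 1), l.parts i = l.parts 1 + ∑ i ∈ Finset.Icc 1 t, l.tail.parts i := by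
  induction t with
  | zero => simp
  | succ t ih =>
    rw [Finset.sum_Icc_succ_top (by omega), ih, Finset.sum_Icc_succ_top (by omega),
      l.tail_parts (Nat.succ_ne_zero t), add_assoc]

theorem size_eq_add_size_tail (l : Ptn) : l.size = l.parts 1 + l.tail.size := by
  have hl : ∀ i, l.numParts + 1 < i → l.parts i = 0 := fun i hi =>
    l.parts_eq_zero_of_numParts_lt (by omega)
  have htail : ∀ i, l.numParts < i → l.tail.parts i = 0 := fun i hi => by
    rw [l.tail_parts (by omega)]
    exact l.parts_eq_zero_of_numParts_lt (by omega)
  rw [← l.sum_Icc_eq_size hl, ← l.tail.sum_Icc_eq_size htail, sum_Icc_succ_eq_add_sum_tail]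

theorem eq_of_parts_one_eq_of_tail_eq {l m : Ptn} (h1 : l.parts 1 = m.parts 1)
    (htail : l.tail = m.tail) : l = m := by
  ext i
  match i with
  | 0 => rw [l.zero_at_zero, m.zero_at_zero]
  | 1 => exact h1
  | i + 2 => rw [← l.tail_parts (Nat.succ_ne_zero i), ← m.tail_parts (Nat.succ_ne_zero i), htail]

def cons (a : ℕ) (γ : Ptn) (h : γ.parts 1 ≤ a) : Ptn where
  parts
    | 0 => 0
    | 1 => a
    | i + 2 => γ.parts (i + 1)
  zero_at_zero := rfl
  antitone := by
    intro i j hi hij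
    match i, j with
    | 1, 1 => exact le_rfl
    | 1, j + 2 => exact (γ.antitone le_rfl (by omega)).trans h
    | i + 2, j + 2 => exact γ.antitone (by omega) (by omega)
  eventually_zero := by
    obtain ⟨N, hN⟩ := γ.eventually_zero
    refine ⟨N + 2, fun i hi => ?_⟩
    match i with
    | i + 2 => exact hN _ (by omega)

@[simp]
theorem cons_parts_one (a : ℕ) (γ : Ptn) (h : γ.parts 1 ≤ a) : (cons a γ h).parts 1 = a := rfl

@[simp]
theorem tail_cons (a : ℕ) (γ : Ptn) (h : γ.parts 1 ≤ a) : (cons a γ h).tail = γ := by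
  ext i
  match i with
  | 0 => exact γ.zero_at_zero.symm
  | i + 1 => rw [tail_parts _ (Nat.succ_ne_zero i)]; rfl

end Ptn

theorem Dom.parts_one_le {l m : Ptn} (h : Dom l m) : l.parts 1 ≤ m.parts 1 := by
  simpa using h 1

theorem dom_iff_dom_tail {l m : Ptn} (h1 : l.parts 1 = m.parts 1) :
    Dom l m ↔ Dom l.tail m.tail := by
  constructor
  · intro h t
    have := h (t + 1)
    rw [l.sum_Icc_succ_eq_add_sum_tail, m.sum_Icc_succ_eq_add_sum_tail, h1] at this
    omega
  · intro h t
    match t with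
    | 0 => simp
    | t + 1 =>
      rw [l.sum_Icc_succ_eq_add_sum_tail, m.sum_Icc_succ_eq_add_sum_tail, h1]
      exact Nat.add_le_add_left (h t) _

theorem statement10_general (n a : ℕ) (τ μ : Ptn) (hτ : τ.size = n)
    (hτ1 : τ.parts 1 = a) (hμ1 : μ.parts 1 = a) :
    (∀ σ : Ptn, σ.size = n → Dom τ σ → Dom σ μ → σ.parts 1 = a) ∧
    (∀ σ : Ptn, σ.size = n → Dom τ σ → Dom σ μ →
        σ.tail.size = n - a ∧ Dom τ.tail σ.tail ∧ Dom σ.tail μ.tail) ∧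
    (∀ σ σ' : Ptn, σ.size = n → Dom τ σ → Dom σ μ →
        σ'.size = n → Dom τ σ' → Dom σ' μ →
        (Dom σ σ' ↔ Dom σ.tail σ'.tail)) ∧
    (∀ σ σ' : Ptn, σ.size = n → Dom τ σ → Dom σ μ →
        σ'.size = n → Dom τ σ' → Dom σ' μ →
        σ.tail = σ'.tail → σ = σ') ∧
    (∀ γ : Ptn, γ.size = n - a → Dom τ.tail γ → Dom γ μ.tail →
        ∃ σ : Ptn, σ.size = n ∧ Dom τ σ ∧ Dom σ μ ∧ σ.tail = γ) := by
  have first (σ : Ptn) (h₁ : Dom τ σ) (h₂ : Dom σ μ) : σ.parts 1 = a :=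
    le_antisymm (hμ1 ▸ h₂.parts_one_le) (hτ1 ▸ h₁.parts_one_le)
  have han : a ≤ n := hτ ▸ hτ1 ▸ τ.size_eq_add_size_tail ▸ Nat.le_add_right _ _
  refine ⟨fun σ _ h₁ h₂ => first σ h₁ h₂, fun σ hσ h₁ h₂ => ?_,
    fun σ σ' _ h₁ h₂ _ h₁' h₂' => dom_iff_dom_tail ((first σ h₁ h₂).trans (first σ' h₁' h₂').symm),
    fun σ σ' _ h₁ h₂ _ h₁' h₂' => Ptn.eq_of_parts_one_eq_of_tail_eq
      ((first σ h₁ h₂).trans (first σ' h₁' h₂').symm), fun γ hγ h₁ h₂ => ?_⟩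
  · have hσ1 := first σ h₁ h₂
    refine ⟨?_, (dom_iff_dom_tail (hτ1.trans hσ1.symm)).1 h₁,
      (dom_iff_dom_tail (hσ1.trans hμ1.symm)).1 h₂⟩
    have := σ.size_eq_add_size_tail
    omega
  · have hγ1 : γ.parts 1 ≤ a := calc
      γ.parts 1 ≤ μ.tail.parts 1 := h₂.parts_one_le
      _ = μ.parts 2 := μ.tail_parts one_ne_zero
      _ ≤ a := hμ1 ▸ μ.antitone le_rfl (by norm_num)
    refine ⟨Ptn.cons a γ hγ1, ?_, ?_, ?_, Ptn.tail_cons a γ hγ1⟩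
    · rw [Ptn.size_eq_add_size_tail, Ptn.cons_parts_one, Ptn.tail_cons, hγ]
      omega
    · rwa [dom_iff_dom_tail (by rw [hτ1, Ptn.cons_parts_one]), Ptn.tail_cons]
    · rwa [dom_iff_dom_tail (by rw [hμ1, Ptn.cons_parts_one]), Ptn.tail_cons]

/-- if `τ ⊴ μ` are partitions of `n` with equal first parts `a`, then every
`σ` of `n` with `τ ⊴ σ ⊴ μ` has first part `a`, and `σ ↦ σ²` is an order isomorphism from
the dominance interval `[τ, μ]` onto the dominance interval `[τ², μ²]` in partitions of
`n - a`. -/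
theorem statement10 (n a : ℕ) (τ μ : Ptn) (hτ : τ.size = n) (hμ : μ.size = n)
    (hdom : Dom τ μ) (hτ1 : τ.parts 1 = a) (hμ1 : μ.parts 1 = a) :
    (∀ σ : Ptn, σ.size = n → Dom τ σ → Dom σ μ → σ.parts 1 = a) ∧
    (∀ σ : Ptn, σ.size = n → Dom τ σ → Dom σ μ →
        σ.tail.size = n - a ∧ Dom τ.tail σ.tail ∧ Dom σ.tail μ.tail) ∧
    (∀ σ σ' : Ptn, σ.size = n → Dom τ σ → Dom σ μ →
        σ'.size = n → Dom τ σ' → Dom σ' μ →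
        (Dom σ σ' ↔ Dom σ.tail σ'.tail)) ∧
    (∀ σ σ' : Ptn, σ.size = n → Dom τ σ → Dom σ μ →
        σ'.size = n → Dom τ σ' → Dom σ' μ →
        σ.tail = σ'.tail → σ = σ') ∧
    (∀ γ : Ptn, γ.size = n - a → Dom τ.tail γ → Dom γ μ.tail →
        ∃ σ : Ptn, σ.size = n ∧ Dom τ σ ∧ Dom σ μ ∧ σ.tail = γ) :=
  statement10_general n a τ μ hτ hτ1 hμ1
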